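/- Let μ be a distribution on binom([n],k) that is C-spectrally independent. Then for every vector v ∈ R^n, Var_{S∼μ}(Σ_{i∈S} v_i) ≤ C·E_{S∼μ}[Σ_{i∈S} v_i²]. Conversely, this family of inequalities for all v implies C-spectral independence. -/

import Mathlib

open Finset BigOperators

noncomputable section

def kSets (n k : ℕ) : Finset (Finset (Fin n)) := Finset.univ.powersetCard k

def margin {n : ℕ} (μ : Finset (Fin n) → ℝ) (k : ℕ) (i : Fin n) : ℝ :=
  ∑ S ∈ kSets n k, if i ∈ S then μ S else 0

def pairProb {n : ℕ} (μ : Finset (Fin n) → ℝ) (k : ℕ) (i j : Fin n) : ℝ :=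
  ∑ S ∈ kSets n k, if i ∈ S ∧ j ∈ S then μ S else 0

def condProb {n : ℕ} (μ : Finset (Fin n) → ℝ) (k : ℕ) (i j : Fin n) : ℝ :=
  pairProb μ k i j / margin μ k i

def corrMatrix {n : ℕ} (μ : Finset (Fin n) → ℝ) (k : ℕ) : Matrix (Fin n) (Fin n) ℝ :=
  fun i j => if i = j then 1 - margin μ k i else condProb μ k i j - margin μ k j

/-- `μ` is `C`-spectrally independent: every eigenvalue of `Ψ_μ` is at most `C`. -/
def SpectrallyIndependent {n : ℕ} (μ : Finset (Fin n) → ℝ) (k : ℕ) (C : ℝ) : Prop :=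
  ∀ t : ℝ, Module.End.HasEigenvalue (Matrix.toLin' (corrMatrix μ k)) t → t ≤ C

def distMean {n : ℕ} (μ : Finset (Fin n) → ℝ) (k : ℕ) (f : Finset (Fin n) → ℝ) : ℝ :=
  ∑ S ∈ kSets n k, μ S * f S

def distVar {n : ℕ} (μ : Finset (Fin n) → ℝ) (k : ℕ) (f : Finset (Fin n) → ℝ) : ℝ :=
  distMean μ k (fun S => (f S - distMean μ k f) ^ 2)

/-!
Write `D = diagonal (P[i])` and `Σ = (P[i, j] - P[i] P[j])` for the covariance matrix of the
indicators `1[i ∈ S]`. Then `Ψ_μ = D⁻¹ Σ`, `Var_μ(Σ_{i ∈ S} v_i) = vᵀ Σ v` and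
`E_μ[Σ_{i ∈ S} v_i²] = vᵀ D v`, so the variance bound says `Σ ≤ C • D` in the Loewner order.
Since `D⁻¹ Σ` is similar to the symmetric matrix `D^{-1/2} Σ D^{-1/2}`, its eigenvalues are at
most `C` iff `D^{-1/2} Σ D^{-1/2} ≤ C • 1`, and conjugating by `D^{1/2}` gives `Σ ≤ C • D`.
-/

open Matrix
open scoped MatrixOrder

namespace Matrix

variable {ι : Type*} [Fintype ι]

open scoped ComplexOrder in
theorem le_iff_forall_dotProduct_mulVec_le {𝕜 : Type*} [RCLike 𝕜] {A B : Matrix ι ι 𝕜}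
    (hA : A.IsHermitian) (hB : B.IsHermitian) :
    A ≤ B ↔ ∀ v, star v ⬝ᵥ A *ᵥ v ≤ star v ⬝ᵥ B *ᵥ v := by
  simp only [le_iff, posSemidef_iff_dotProduct_mulVec, hB.sub hA, true_and, sub_mulVec,
    dotProduct_sub, sub_nonneg]

variable [DecidableEq ι]

theorem spectrum_diagonal_inv_mul_mul_diagonal {R : Type*} [Field R] {s : ι → R}
    (hs : ∀ i, s i ≠ 0) (B : Matrix ι ι R) :
    spectrum R (diagonal s⁻¹ * B * diagonal s) = spectrum R B := by
  let u : (Matrix ι ι R)ˣ :=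
    ⟨diagonal s, diagonal s⁻¹, by simp [hs, ← diagonal_one], by simp [hs, ← diagonal_one]⟩
  exact spectrum.units_conjugate' (u := u)

theorem IsHermitian.forall_hasEigenvalue_diagonal_inv_mul_le_iff {A : Matrix ι ι ℝ}
    (hA : A.IsHermitian) {d : ι → ℝ} (hd : ∀ i, 0 < d i) (C : ℝ) :
    (∀ t, Module.End.HasEigenvalue (toLin' (diagonal d⁻¹ * A)) t → t ≤ C) ↔
      A ≤ C • diagonal d := by
  set s : ι → ℝ := fun i => √(d i)
  have hs i : s i ≠ 0 := (Real.sqrt_pos.2 (hd i)).ne'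
  have hss i : s i * s i = d i := Real.mul_self_sqrt (hd i).le
  set S := diagonal s
  set T := diagonal s⁻¹
  have hST : S * T = 1 := by simp [S, T, hs, ← diagonal_one]
  have hTS : T * S = 1 := by simp [S, T, hs, ← diagonal_one]
  have hSS : S * S = diagonal d := by simp [S, hss]
  have hTT : T * T = diagonal d⁻¹ := by simp [T, ← hss]
  set B := T * A * T
  have hB : B.IsHermitian := by
    simpa [B, T, diagonal_conjTranspose] using isHermitian_conjTranspose_mul_mul T hA
  calc (∀ t, Module.End.HasEigenvalue (toLin' (diagonal d⁻¹ * A)) t → t ≤ C)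
      ↔ ∀ t ∈ spectrum ℝ B, t ≤ C := by
        have hconj : T * B * S = diagonal d⁻¹ * A := by
          simp only [B, mul_assoc, hTS, mul_one]
          rw [← mul_assoc, hTT]
        simp only [Module.End.hasEigenvalue_iff_mem_spectrum, spectrum_toLin', ← hconj,
          T, S, spectrum_diagonal_inv_mul_mul_diagonal hs]
    _ ↔ B ≤ algebraMap ℝ _ C := (le_algebraMap_iff_spectrum_le hB.isSelfAdjoint).symm
    _ ↔ A ≤ C • diagonal d := by
        have hconj : star S * (algebraMap ℝ _ C - B) * S = C • diagonal d - A := by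
          have hS : star S = S := by simp [S, star_eq_conjTranspose]
          rw [hS, Algebra.algebraMap_eq_smul_one, mul_sub, sub_mul, Matrix.mul_smul, mul_one,
            Matrix.smul_mul, hSS]
          simp only [B, ← mul_assoc, hST, one_mul]
          rw [mul_assoc, hTS, mul_one]
        rw [le_iff, le_iff, ← hconj, (isUnit_diagonal.2 (Pi.isUnit_iff.2
          fun i => (hs i).isUnit)).posSemidef_star_left_conjugate_iff]

end Matrix

section

variable {n : ℕ} (μ : Finset (Fin n) → ℝ) (k : ℕ)

def covMatrix : Matrix (Fin n) (Fin n) ℝ :=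
  of (pairProb μ k) - vecMulVec (margin μ k) (margin μ k)

theorem pairProb_comm (i j : Fin n) : pairProb μ k i j = pairProb μ k j i :=
  Finset.sum_congr rfl fun _ _ => by simp only [and_comm]

theorem pairProb_self (i : Fin n) : pairProb μ k i i = margin μ k i :=
  Finset.sum_congr rfl fun _ _ => by simp only [and_self]

theorem isHermitian_covMatrix : (covMatrix μ k).IsHermitian :=
  IsHermitian.ext fun i j => by
    simp [covMatrix, vecMulVec_apply, pairProb_comm μ k i j, mul_comm]

theorem distMean_sum_eq_margin_dotProduct (u : Fin n → ℝ) :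
    distMean μ k (fun S => ∑ i ∈ S, u i) = margin μ k ⬝ᵥ u := by
  simp only [distMean, margin, dotProduct, Finset.sum_mul, Finset.mul_sum, ite_mul, zero_mul]
  rw [Finset.sum_comm]
  refine Finset.sum_congr rfl fun S _ => ?_
  rw [Finset.sum_ite_mem, univ_inter]

theorem distMean_sum_sq_eq_dotProduct_pairProb_mulVec (v : Fin n → ℝ) :
    distMean μ k (fun S => (∑ i ∈ S, v i) ^ 2) = v ⬝ᵥ of (pairProb μ k) *ᵥ v := by
  simp only [distMean, pairProb, dotProduct, mulVec, of_apply, Finset.sum_mul, Finset.mul_sum,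
    ite_mul, zero_mul, mul_ite, mul_zero]
  calc ∑ S ∈ kSets n k, μ S * (∑ i ∈ S, v i) ^ 2
      = ∑ S ∈ kSets n k, ∑ i, ∑ j, if i ∈ S ∧ j ∈ S then v i * (μ S * v j) else 0 := by
        refine Finset.sum_congr rfl fun S _ => ?_
        simp only [ite_and, Finset.sum_ite_irrel, Finset.sum_const_zero, Finset.sum_ite_mem,
          univ_inter]
        rw [sq, Finset.sum_mul_sum, Finset.mul_sum]
        refine Finset.sum_congr rfl fun i _ => ?_
        rw [Finset.mul_sum]
        exact Finset.sum_congr rfl fun j _ => by ring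
    _ = _ := by
        rw [Finset.sum_comm]
        exact Finset.sum_congr rfl fun i _ => Finset.sum_comm

variable {μ k}

theorem corrMatrix_eq_diagonal_inv_mul_covMatrix (hmarg : ∀ i, margin μ k i ≠ 0) :
    corrMatrix μ k = diagonal (margin μ k)⁻¹ * covMatrix μ k := by
  ext i j
  rw [diagonal_mul, covMatrix, Matrix.sub_apply, of_apply, vecMulVec_apply, Pi.inv_apply,
    corrMatrix, condProb]
  split_ifs with hij
  · subst hij
    rw [pairProb_self]
    field_simp [hmarg i]
  · field_simp [hmarg i]

theorem distVar_eq_distMean_sq_sub_sq (hsum : ∑ S ∈ kSets n k, μ S = 1)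
    (f : Finset (Fin n) → ℝ) :
    distVar μ k f = distMean μ k (fun S => f S ^ 2) - distMean μ k f ^ 2 := by
  set m := distMean μ k f
  calc distVar μ k f
      = ∑ S ∈ kSets n k, (μ S * f S ^ 2 - 2 * m * (μ S * f S) + m ^ 2 * μ S) := by
        unfold distVar
        exact Finset.sum_congr rfl fun S _ => by ring
    _ = distMean μ k (fun S => f S ^ 2) - m ^ 2 := by
        rw [Finset.sum_add_distrib, Finset.sum_sub_distrib, ← Finset.mul_sum, ← Finset.mul_sum,
          hsum]
        change distMean μ k _ - 2 * m * m + _ = _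
        ring

theorem distVar_sum_eq_dotProduct_covMatrix_mulVec (hsum : ∑ S ∈ kSets n k, μ S = 1)
    (v : Fin n → ℝ) :
    distVar μ k (fun S => ∑ i ∈ S, v i) = v ⬝ᵥ covMatrix μ k *ᵥ v := by
  rw [distVar_eq_distMean_sq_sub_sq hsum, distMean_sum_sq_eq_dotProduct_pairProb_mulVec,
    distMean_sum_eq_margin_dotProduct, covMatrix, sub_mulVec, dotProduct_sub, vecMulVec_mulVec]
  simp [sq, dotProduct_comm v]

end

theorem spectral_independence_iff_variance_bound_general
    (n k : ℕ) (μ : Finset (Fin n) → ℝ) (C : ℝ)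
    (hsum : ∑ S ∈ kSets n k, μ S = 1)
    (hmarg : ∀ i, 0 < margin μ k i) :
    SpectrallyIndependent μ k C ↔
      ∀ v : Fin n → ℝ,
        distVar μ k (fun S => ∑ i ∈ S, v i) ≤
          C * ∑ S ∈ kSets n k, μ S * ∑ i ∈ S, (v i) ^ 2 := by
  rw [SpectrallyIndependent, corrMatrix_eq_diagonal_inv_mul_covMatrix fun i => (hmarg i).ne',
    (isHermitian_covMatrix μ k).forall_hasEigenvalue_diagonal_inv_mul_le_iff hmarg,
    le_iff_forall_dotProduct_mulVec_le (isHermitian_covMatrix μ k)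
      ((isHermitian_diagonal _).smul (IsSelfAdjoint.all C))]
  refine forall_congr' fun v => ?_
  change _ ↔ _ ≤ C * distMean μ k (fun S => ∑ i ∈ S, v i ^ 2)
  rw [distVar_sum_eq_dotProduct_covMatrix_mulVec hsum, distMean_sum_eq_margin_dotProduct]
  simp [Matrix.smul_mulVec, dotProduct, mulVec_diagonal, sq, Finset.mul_sum, mul_left_comm]

/-- A distribution `μ` on k-subsets of `[n]` is `C`-spectrally independent
if and only if for every vector `v`,
`Var_{S∼μ}(Σ_{i∈S} v_i) ≤ C · E_{S∼μ}[Σ_{i∈S} v_i²]`. -/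
theorem spectral_independence_iff_variance_bound
    (n k : ℕ) (μ : Finset (Fin n) → ℝ) (C : ℝ)
    (hk : 1 ≤ k) (hC : 0 < C)
    (hnonneg : ∀ S, 0 ≤ μ S)
    (hsum : ∑ S ∈ kSets n k, μ S = 1)
    (hmarg : ∀ i, 0 < margin μ k i) :
    SpectrallyIndependent μ k C ↔
      ∀ v : Fin n → ℝ,
        distVar μ k (fun S => ∑ i ∈ S, v i) ≤
          C * ∑ S ∈ kSets n k, μ S * ∑ i ∈ S, (v i) ^ 2 :=
  spectral_independence_iff_variance_bound_general n k μ C hsum hmarg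

end
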